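/- Let E_X ≥ E_Z > 0, let 0 < ε < 1, and let L₁, L₂ be integers with L₁ ≥ -log₂(ε) - log₂(E_Z) and L₂ ≥ -log₂(ε) + log₂(E_X). With p_l = 1/(1 + e^{2^l/E_X}) and p̃_l = 1/(1 + e^{2^l/E_Z}), the following inequality holds: Σ_{l=-L₁}^{L₂} [H(p_l) - H(p̃_l)] ≥ log₂(E_X/E_Z) - 4·log₂(e)·ε. -/

import Mathlib

/-!
Write `G c` for the entropy (in nats) of a geometric variable `N` with `P(N = n) ∝ e^{-c n}`.
The lowest binary digit of `N` is Bernoulli with parameter `1 / (1 + e^c)` and independent of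
`⌊N / 2⌋`, which is geometric with ratio `e^{-2c}`; hence `H(1 / (1 + e^c)) = (G c - G (2c)) / ln 2`
and the sum telescopes to boundary values of `G`. At the top level `G c ≤ 2 / c` is at most `ε`,
and at the bottom level `G c = 1 - ln c + O(c)`, so the two bottom terms differ by
`ln (E_X / E_Z)` up to `2ε`.
-/

/-- The binary entropy function (base 2): `H(p) = -p log₂ p - (1-p) log₂ (1-p)`. -/
noncomputable def binEnt (p : ℝ) : ℝ :=
  -(p * Real.logb 2 p) - (1 - p) * Real.logb 2 (1 - p)

open Real Finset

lemma binEnt_one_div_one_add_exp (c : ℝ) :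
    binEnt (1 / (1 + exp c)) = (log (1 + exp c) - c * exp c / (1 + exp c)) / log 2 := by
  have hE : 0 < 1 + exp c := by positivity
  have hq : 1 - 1 / (1 + exp c) = exp c / (1 + exp c) := by field_simp; ring
  rw [binEnt, hq, logb, logb, one_div, log_inv, log_div (exp_pos c).ne' hE.ne', log_exp]
  field_simp
  ring

noncomputable def geometricEntropy (c : ℝ) : ℝ :=
  c / (exp c - 1) - log (1 - exp (-c))

section geometricEntropy

variable {c : ℝ}

lemma geometricEntropy_eq (hc : 0 < c) :
    geometricEntropy c = c / (exp c - 1) + c - log (exp c - 1) := by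
  have hE : 0 < exp c - 1 := sub_pos.2 (one_lt_exp_iff.2 hc)
  have : 1 - exp (-c) = (exp c - 1) / exp c := by rw [exp_neg]; field_simp
  rw [geometricEntropy, this, log_div hE.ne' (exp_pos c).ne', log_exp]
  ring

lemma binEnt_one_div_one_add_exp_eq_geometricEntropy_sub (hc : 0 < c) :
    binEnt (1 / (1 + exp c)) = (geometricEntropy c - geometricEntropy (2 * c)) / log 2 := by
  have hE : 0 < exp c - 1 := sub_pos.2 (one_lt_exp_iff.2 hc)
  have h2 : exp (2 * c) - 1 = (exp c - 1) * (1 + exp c) := by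
    rw [two_mul, exp_add]; ring
  rw [binEnt_one_div_one_add_exp, geometricEntropy_eq hc, geometricEntropy_eq (by positivity), h2,
    log_mul hE.ne' (by positivity)]
  field_simp
  ring

lemma geometricEntropy_nonneg (hc : 0 < c) : 0 ≤ geometricEntropy c := by
  have hE : 0 < exp c - 1 := sub_pos.2 (one_lt_exp_iff.2 hc)
  have : log (1 - exp (-c)) ≤ 0 :=
    log_nonpos (sub_nonneg.2 (exp_le_one_iff.2 (by linarith))) (by linarith [exp_pos (-c)])
  unfold geometricEntropy
  linarith [div_nonneg hc.le hE.le]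

lemma geometricEntropy_le_two_div (hc : 0 < c) : geometricEntropy c ≤ 2 / c := by
  have hE : 0 < exp c - 1 := sub_pos.2 (one_lt_exp_iff.2 hc)
  have hlog : c - log (exp c - 1) ≤ 1 / (exp c - 1) := by
    have := log_le_sub_one_of_pos (div_pos (exp_pos c) hE)
    rw [log_div (exp_pos c).ne' hE.ne', log_exp] at this
    convert this using 1
    field_simp
    ring
  have hquad := quadratic_le_exp_of_nonneg hc.le
  rw [geometricEntropy_eq hc]
  calc c / (exp c - 1) + c - log (exp c - 1) ≤ (c + 1) / (exp c - 1) := by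
        rw [add_div]; linarith
    _ ≤ 2 / c := by
        rw [div_le_div_iff₀ hE hc]; nlinarith

lemma geometricEntropy_le_one_add_sub_log (hc : 0 < c) :
    geometricEntropy c ≤ 1 + c - log c := by
  have hE : c ≤ exp c - 1 := by linarith [add_one_le_exp c]
  have h1 : c / (exp c - 1) ≤ 1 := div_le_one_of_le₀ hE (by linarith)
  have h2 : log c ≤ log (exp c - 1) := log_le_log hc hE
  rw [geometricEntropy_eq hc]
  linarith

lemma one_sub_sub_log_le_geometricEntropy (hc : 0 < c) :
    1 - c - log c ≤ geometricEntropy c := by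
  have hE : 0 < exp c - 1 := sub_pos.2 (one_lt_exp_iff.2 hc)
  have hu : exp (-c) ≤ c / (exp c - 1) := by
    rw [le_div_iff₀ hE, mul_sub, ← exp_add, neg_add_cancel, exp_zero, mul_one]
    linarith [add_one_le_exp (-c)]
  have hlog : -c ≤ log c - log (exp c - 1) := by
    rw [← log_div hc.ne' hE.ne', ← log_exp (-c)]
    exact log_le_log (exp_pos _) hu
  rw [geometricEntropy_eq hc]
  linarith [add_one_le_exp (-c)]

lemma log_div_sub_add_le_geometricEntropy_sub {x y : ℝ} (hx : 0 < x) (hy : 0 < y) :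
    log (y / x) - (x + y) ≤ geometricEntropy x - geometricEntropy y := by
  rw [log_div hy.ne' hx.ne']
  linarith [one_sub_sub_log_le_geometricEntropy hx, geometricEntropy_le_one_add_sub_log hy]

end geometricEntropy

theorem Int.sum_Ico_sub' {M : Type*} [AddCommGroup M] (f : ℤ → M) {a b : ℤ} (h : a ≤ b) :
    ∑ l ∈ Ico a b, (f l - f (l + 1)) = f a - f b := by
  induction b, h using Int.leInduction with
  | base => simp
  | succ b hb ih => rw [← insert_Ico_right_eq_Ico_add_one hb, sum_insert (by simp), ih]; abel

lemma binEnt_one_div_one_add_exp_zpow_div {E : ℝ} (hE : 0 < E) (l : ℤ) :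
    binEnt (1 / (1 + exp (2 ^ l / E))) =
      (geometricEntropy (2 ^ l / E) - geometricEntropy (2 ^ (l + 1) / E)) / log 2 := by
  have h : (2 : ℝ) ^ (l + 1) / E = 2 * (2 ^ l / E) := by rw [zpow_add_one₀ two_ne_zero]; ring
  rw [h]
  exact binEnt_one_div_one_add_exp_eq_geometricEntropy_sub (by positivity)

lemma zpow_le_of_le_logb {b x : ℝ} (hb : 1 < b) (hx : 0 < x) {n : ℤ} (h : (n : ℝ) ≤ logb b x) :
    b ^ n ≤ x := by
  rwa [← rpow_intCast, ← le_logb_iff_rpow_le hb hx]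

lemma le_zpow_of_logb_le {b x : ℝ} (hb : 1 < b) (hx : 0 < x) {n : ℤ} (h : logb b x ≤ n) :
    x ≤ b ^ n := by
  rwa [← rpow_intCast, ← logb_le_iff_le_rpow hb hx]

lemma sum_Icc_binEnt_sub_eq {EX EZ : ℝ} (hEX : 0 < EX) (hEZ : 0 < EZ) {a b : ℤ} (h : a ≤ b + 1) :
    ∑ l ∈ Icc a b, (binEnt (1 / (1 + exp (2 ^ l / EX))) - binEnt (1 / (1 + exp (2 ^ l / EZ)))) =
      ((geometricEntropy (2 ^ a / EX) - geometricEntropy (2 ^ a / EZ)) -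
        (geometricEntropy (2 ^ (b + 1) / EX) - geometricEntropy (2 ^ (b + 1) / EZ))) / log 2 := by
  rw [← Ico_add_one_right_eq_Icc,
    ← Int.sum_Ico_sub' (fun l ↦ geometricEntropy (2 ^ l / EX) - geometricEntropy (2 ^ l / EZ)) h,
    sum_div]
  refine sum_congr rfl fun l _ ↦ ?_
  rw [binEnt_one_div_one_add_exp_zpow_div hEX, binEnt_one_div_one_add_exp_zpow_div hEZ]
  ring

/-- Intermediate bound (steps (b)-(e)) in the proof of the paper's Theorem 3: with
`p_l = 1/(1 + exp (2^l / E_X))` and `p̃_l = 1/(1 + exp (2^l / E_Z))`,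
if `E_X ≥ E_Z > 0`, `0 < ε < 1`, `L₁ ≥ -log₂ ε - log₂ E_Z` and `L₂ ≥ -log₂ ε + log₂ E_X`, then
`∑_{l = -L₁}^{L₂} [H(p_l) - H(p̃_l)] ≥ log₂ (E_X / E_Z) - 4 log₂(e) ε`. -/
theorem expansion_entropy_difference_bound (EX EZ ε : ℝ) (hEZ : 0 < EZ) (hE : EZ ≤ EX)
    (hε : 0 < ε) (hε1 : ε < 1) (L1 L2 : ℤ)
    (hL1 : -Real.logb 2 ε - Real.logb 2 EZ ≤ (L1 : ℝ))
    (hL2 : -Real.logb 2 ε + Real.logb 2 EX ≤ (L2 : ℝ)) :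
    Real.logb 2 (EX / EZ) - 4 * Real.logb 2 (Real.exp 1) * ε ≤
      ∑ l ∈ Finset.Icc (-L1) L2,
        (binEnt (1 / (1 + Real.exp (2 ^ l / EX))) -
          binEnt (1 / (1 + Real.exp (2 ^ l / EZ)))) := by
  have hEX : 0 < EX := hEZ.trans_le hE
  have hbot : (2 : ℝ) ^ (-L1) ≤ ε * EZ := zpow_le_of_le_logb one_lt_two (by positivity)
    (by rw [logb_mul hε.ne' hEZ.ne']; push_cast; linarith)
  have htop : EX / ε ≤ (2 : ℝ) ^ L2 := le_zpow_of_logb_le one_lt_two (by positivity)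
    (by rw [logb_div hEX.ne' hε.ne']; linarith)
  have hL : -L1 ≤ L2 + 1 := by
    refine ((zpow_lt_zpow_iff_right₀ one_lt_two).1 (?_ : (2 : ℝ) ^ (-L1) < 2 ^ L2)).le.trans (by omega)
    calc (2 : ℝ) ^ (-L1) ≤ ε * EX := hbot.trans (by gcongr)
      _ < EX / ε := by rw [lt_div_iff₀ hε]; nlinarith [mul_pos hε hEX]
      _ ≤ 2 ^ L2 := htop
  have hlhs : logb 2 (EX / EZ) - 4 * logb 2 (exp 1) * ε = (log (EX / EZ) - 4 * ε) / log 2 := by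
    rw [logb, logb, log_exp]; ring
  rw [sum_Icc_binEnt_sub_eq hEX hEZ hL, hlhs, div_le_div_iff_of_pos_right (log_pos one_lt_two)]
  have hbotZ : 2 ^ (-L1) / EZ ≤ ε := (div_le_iff₀ hEZ).2 hbot
  have hbotX : 2 ^ (-L1) / EX ≤ 2 ^ (-L1) / EZ := by gcongr
  have hbotXZ := log_div_sub_add_le_geometricEntropy_sub (x := 2 ^ (-L1) / EX)
    (y := 2 ^ (-L1) / EZ) (by positivity) (by positivity)
  rw [show 2 ^ (-L1) / EZ / (2 ^ (-L1) / EX) = EX / EZ by field_simp] at hbotXZ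
  have htopX : 2 / (2 ^ (L2 + 1) / EX) ≤ ε := by
    rw [zpow_add_one₀ two_ne_zero, show 2 / (2 ^ L2 * 2 / EX) = EX / 2 ^ L2 by field_simp,
      div_le_iff₀ (by positivity)]
    exact (div_le_iff₀' hε).1 htop
  linarith [geometricEntropy_le_two_div (c := 2 ^ (L2 + 1) / EX) (by positivity),
    geometricEntropy_nonneg (c := 2 ^ (L2 + 1) / EZ) (by positivity)]
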